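/- arXiv:1805.01400 — 2 statements merged into one kernel-verified Lean document; each statement's English description precedes it below -/
import Mathlib

section
/- Let a, b ∈ k^× and c ∈ ℂ^×. If Kl_{u·a}^{n;m}(ψ; (k₁,…,k_n; l₁,…,l_m), (χ₁,…,χ_n; η₁,…,η_m)) = c · Kl_{u·b}^{n;m}(ψ; (k₁,…,k_n; l₁,…,l_m), (χ₁,…,χ_n; η₁,…,η_m)) for every u ∈ k^×, then c = 1 and a = b. (Proposition on recovering the parameter of a Kloosterman sum from provportionality of its translates.) -/
open scoped BigOperators

open Finset

section KloostermanAux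

lemma AddChar.map_finsum {A M ι : Type*} [AddCommMonoid A] [CommMonoid M]
    (ψ : AddChar A M) (s : Finset ι) (f : ι → A) :
    ψ (∑ i ∈ s, f i) = ∏ i ∈ s, ψ (f i) := by
  induction s using Finset.cons_induction with
  | empty => simp
  | cons a s ha ih => rw [Finset.sum_cons, Finset.prod_cons, AddChar.map_add_eq_mul, ih]

lemma gaussSum_eq_sum_units' {F : Type*} [Field F] [Fintype F] [DecidableEq F]
    (μ : MulChar F ℂ) (ψF : AddChar F ℂ) :
    gaussSum μ ψF = ∑ t : Fˣ, μ (t : F) * ψF (t : F) := by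
  rw [gaussSum, ← Finset.sum_erase (a := (0 : F)) _ (by simp [MulChar.map_zero])]
  have himg : (univ : Finset F).erase 0 = Finset.image Units.val (univ : Finset Fˣ) := by
    ext a
    simp only [Finset.mem_erase, Finset.mem_univ, and_true, Finset.mem_image, true_and]
    constructor
    · exact fun h => ⟨Units.mk0 a h, rfl⟩
    · rintro ⟨u, rfl⟩; exact u.ne_zero
  rw [himg, Finset.sum_image (fun x _ y _ h => Units.ext h)]

lemma gaussSum_ne_zero' {F : Type*} [Field F] [Fintype F] [DecidableEq F]
    (μ : MulChar F ℂ) {ψF : AddChar F ℂ} (hψ : ∃ x, ψF x ≠ 1) :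
    gaussSum μ ψF ≠ 0 := by
  have hψ0 : ψF ≠ 0 := by
    rintro rfl; obtain ⟨x, hx⟩ := hψ; exact hx rfl
  by_cases hμ : μ = 1
  · subst hμ
    have h0 : ∑ a : F, ψF a = 0 := AddChar.sum_eq_zero_iff_ne_zero.mpr hψ0
    have h1 : ψF 0 + ∑ a ∈ univ.erase 0, ψF a = ∑ a : F, ψF a :=
      Finset.add_sum_erase _ _ (mem_univ 0)
    have h2 : gaussSum 1 ψF = ∑ a ∈ univ.erase 0, ψF a := by
      rw [gaussSum, ← Finset.sum_erase (a := (0 : F)) _ (by simp [MulChar.map_zero])]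
      exact Finset.sum_congr rfl fun a ha => by
        rw [MulChar.one_apply (isUnit_iff_ne_zero.mpr (Finset.ne_of_mem_erase ha)), one_mul]
    rw [h2]
    have h3 : (1 : ℂ) + ∑ a ∈ univ.erase 0, ψF a = 0 := by
      rwa [← AddChar.map_zero_eq_one ψF, h1]
    intro h; rw [h] at h3; simp at h3
  · intro h
    have hprim : ψF.IsPrimitive := AddChar.IsPrimitive.of_ne_one (by
      intro h1; apply hψ0; ext x; rw [h1]; rfl)
    have := gaussSum_mul_gaussSum_eq_card hμ hprim
    rw [h, zero_mul] at this
    exact (Nat.cast_ne_zero.mpr Fintype.card_ne_zero) this.symm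

/-- The multiplicative character of `k'` obtained by composing a multiplicative character of `k`
with the norm map. -/
noncomputable def normMulChar {k k' : Type*} [Field k] [Field k']
    [Algebra k k'] [Module.Finite k k'] (μ : MulChar k ℂ) : MulChar k' ℂ where
  toFun y := μ (Algebra.norm k y)
  map_one' := by simp
  map_mul' x y := by simp
  map_nonunit' y hy := by
    have hy0 : y = 0 := by simpa [isUnit_iff_ne_zero] using hy
    subst hy0
    show μ (Algebra.norm k (0 : k')) = 0
    rw [Algebra.norm_zero, MulChar.map_zero]

@[simp] lemma normMulChar_apply {k k' : Type*} [Field k] [Field k']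
    [Algebra k k'] [Module.Finite k k'] (μ : MulChar k ℂ) (y : k') :
    normMulChar μ y = μ (Algebra.norm k y) := rfl

end KloostermanAux

/-- The generalized Kloosterman sum
`Kl_u^{n;m}(ψ; (k₁,…,kₙ; l₁,…,l_m), (χ₁,…,χₙ; η₁,…,η_m))` attached to a finite field `k`,
a quadratic extension `k'` of `k` (with norm `Nr = Algebra.norm k` and trace
`Tr = Algebra.trace k k'`), a nontrivial additive character `ψ` of `k`, weights `kk`, `ll`,
and multiplicative characters `χs`, `ηs` of `k^×`. -/
noncomputable def Kl {k k' : Type*} [Field k] [Fintype k] [DecidableEq k]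
    [Field k'] [Fintype k'] [DecidableEq k'] [Algebra k k']
    (ψ : AddChar k ℂ) {n m : ℕ} (kk : Fin n → ℕ) (ll : Fin m → ℕ)
    (χs : Fin n → MulChar k ℂ) (ηs : Fin m → MulChar k ℂ) (u : kˣ) : ℂ :=
  ∑ x : Fin n → kˣ, ∑ y : Fin m → k'ˣ,
    if (∏ i, x i ^ kk i) * (∏ j, (Units.map (Algebra.norm k : k' →* k) (y j)) ^ ll j) = u then
      ψ (∑ i, ((x i : k))) * ψ (Algebra.trace k k' (∑ j, ((y j : k')))) *
        (∏ i, χs i ((x i : k))) * (∏ j, ηs j (Algebra.norm k ((y j : k'))))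
    else 0

/-- The "Mellin transform" of the Kloosterman sum factors as a product of Gauss sums. -/
lemma kloosterman_mellin_eq {k k' : Type*} [Field k] [Fintype k] [DecidableEq k]
    [Field k'] [Fintype k'] [DecidableEq k'] [Algebra k k'] [Module.Finite k k']
    (ψ : AddChar k ℂ) {n m : ℕ} (kk : Fin n → ℕ) (ll : Fin m → ℕ)
    (hll : ∀ j, 0 < ll j)
    (χs : Fin n → MulChar k ℂ) (ηs : Fin m → MulChar k ℂ) (χ : MulChar k ℂ) :
    ∑ u : kˣ, χ (u : k) * Kl (k' := k') ψ kk ll χs ηs u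
      = (∏ i, ∑ t : kˣ, (χs i * χ ^ kk i) (t : k) * ψ (t : k))
        * ∏ j, ∑ s : k'ˣ, (normMulChar (ηs j * χ ^ ll j)) (s : k') *
            (ψ.compAddMonoidHom (Algebra.trace k k').toAddMonoidHom) (s : k') := by
  classical
  calc
    ∑ u : kˣ, χ (u : k) * Kl (k' := k') ψ kk ll χs ηs u
      = ∑ u : kˣ, ∑ x : Fin n → kˣ, ∑ y : Fin m → k'ˣ,
          (if (∏ i, x i ^ kk i) * (∏ j, (Units.map (Algebra.norm k : k' →* k) (y j)) ^ ll j) = u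
            then χ (u : k) *
              (ψ (∑ i, ((x i : k))) * ψ (Algebra.trace k k' (∑ j, ((y j : k')))) *
              (∏ i, χs i ((x i : k))) * (∏ j, ηs j (Algebra.norm k ((y j : k')))))
            else 0) := by
        simp only [Kl, Finset.mul_sum, mul_ite, mul_zero]
    _ = ∑ x : Fin n → kˣ, ∑ y : Fin m → k'ˣ, ∑ u : kˣ,
          (if (∏ i, x i ^ kk i) * (∏ j, (Units.map (Algebra.norm k : k' →* k) (y j)) ^ ll j) = u
            then χ (u : k) *
              (ψ (∑ i, ((x i : k))) * ψ (Algebra.trace k k' (∑ j, ((y j : k')))) *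
              (∏ i, χs i ((x i : k))) * (∏ j, ηs j (Algebra.norm k ((y j : k')))))
            else 0) := by
        rw [Finset.sum_comm]
        exact Finset.sum_congr rfl fun x _ => Finset.sum_comm
    _ = ∑ x : Fin n → kˣ, ∑ y : Fin m → k'ˣ,
          χ ((((∏ i, x i ^ kk i) * (∏ j, (Units.map (Algebra.norm k : k' →* k) (y j)) ^ ll j) : kˣ) : k)) *
              (ψ (∑ i, ((x i : k))) * ψ (Algebra.trace k k' (∑ j, ((y j : k')))) *
              (∏ i, χs i ((x i : k))) * (∏ j, ηs j (Algebra.norm k ((y j : k'))))) := by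
        refine Finset.sum_congr rfl fun x _ => Finset.sum_congr rfl fun y _ => ?_
        rw [Finset.sum_ite_eq]
        simp
    _ = ∑ x : Fin n → kˣ, ∑ y : Fin m → k'ˣ,
          (∏ i, (χs i * χ ^ kk i) ((x i : k)) * ψ ((x i : k))) *
          (∏ j, (normMulChar (ηs j * χ ^ ll j)) ((y j : k')) *
            (ψ.compAddMonoidHom (Algebra.trace k k').toAddMonoidHom) ((y j : k'))) := by
        refine Finset.sum_congr rfl fun x _ => Finset.sum_congr rfl fun y _ => ?_
        have hcoe : ((((∏ i, x i ^ kk i) * (∏ j, (Units.map (Algebra.norm k : k' →* k) (y j)) ^ ll j) : kˣ) : k))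
            = (∏ i, ((x i : k)) ^ kk i) * (∏ j, (Algebra.norm k ((y j : k'))) ^ ll j) := by
          push_cast
          rfl
        rw [hcoe, map_mul, map_prod, map_prod]
        have htr : ψ (Algebra.trace k k' (∑ j, ((y j : k'))))
            = ∏ j, (ψ.compAddMonoidHom (Algebra.trace k k').toAddMonoidHom) ((y j : k')) := by
          rw [map_sum, AddChar.map_finsum]
          rfl
        rw [htr, AddChar.map_finsum]
        simp only [map_pow, MulChar.mul_apply, normMulChar_apply,
          MulChar.pow_apply' _ (hll _).ne', MulChar.pow_apply_coe]
        simp only [Finset.prod_mul_distrib]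
        ring
    _ = (∑ x : Fin n → kˣ, ∏ i, (χs i * χ ^ kk i) ((x i : k)) * ψ ((x i : k))) *
        (∑ y : Fin m → k'ˣ, ∏ j, (normMulChar (ηs j * χ ^ ll j)) ((y j : k')) *
            (ψ.compAddMonoidHom (Algebra.trace k k').toAddMonoidHom) ((y j : k'))) := by
        rw [← Finset.sum_mul_sum]
    _ = (∏ i, ∑ t : kˣ, (χs i * χ ^ kk i) (t : k) * ψ (t : k))
        * ∏ j, ∑ s : k'ˣ, (normMulChar (ηs j * χ ^ ll j)) (s : k') *
            (ψ.compAddMonoidHom (Algebra.trace k k').toAddMonoidHom) (s : k') := by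
        congr 1
        · rw [← Fintype.piFinset_univ]
          exact (Finset.prod_univ_sum (fun _ => (univ : Finset kˣ))
            (fun i t => (χs i * χ ^ kk i) ((t : kˣ) : k) * ψ ((t : kˣ) : k))).symm
        · rw [← Fintype.piFinset_univ]
          exact (Finset.prod_univ_sum (fun _ => (univ : Finset k'ˣ))
            (fun j s => (normMulChar (ηs j * χ ^ ll j)) ((s : k'ˣ) : k') *
              (ψ.compAddMonoidHom (Algebra.trace k k').toAddMonoidHom) ((s : k'ˣ) : k'))).symm

/-- **Recovering the parameter of a Kloosterman sum from proportionality of its translates.**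
If `Kl_{u·a} = c · Kl_{u·b}` for every `u ∈ k^×`, then `c = 1` and `a = b`. -/
theorem kloosterman_translate_proportional {k k' : Type*} [Field k] [Fintype k] [DecidableEq k]
    [Field k'] [Fintype k'] [DecidableEq k'] [Algebra k k']
    (h2 : Module.finrank k k' = 2)
    (ψ : AddChar k ℂ) (hψ : ∃ x : k, ψ x ≠ 1)
    {n m : ℕ} (kk : Fin n → ℕ) (hkk : ∀ i, 0 < kk i)
    (ll : Fin m → ℕ) (hll : ∀ j, 0 < ll j)
    (χs : Fin n → MulChar k ℂ) (ηs : Fin m → MulChar k ℂ)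
    (a b : kˣ) (c : ℂˣ)
    (hprop : ∀ u : kˣ,
      Kl (k' := k') ψ kk ll χs ηs (u * a) = (c : ℂ) * Kl (k' := k') ψ kk ll χs ηs (u * b)) :
    c = 1 ∧ a = b := by
  classical
  haveI hfd : FiniteDimensional k k' :=
    FiniteDimensional.of_finrank_pos (by rw [h2]; norm_num)
  haveI halg : Algebra.IsAlgebraic k k' := Algebra.IsAlgebraic.of_finite k k'
  have hψ' : ∃ z : k',
      (ψ.compAddMonoidHom (Algebra.trace k k').toAddMonoidHom) z ≠ 1 := by
    obtain ⟨x, hx⟩ := hψ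
    obtain ⟨z, hz⟩ := Algebra.trace_surjective k k' x
    refine ⟨z, ?_⟩
    show ψ (Algebra.trace k k' z) ≠ 1
    rwa [hz]
  -- the Mellin transform is nonzero
  have hM : ∀ χ : MulChar k ℂ,
      (∑ u : kˣ, χ (u : k) * Kl (k' := k') ψ kk ll χs ηs u) ≠ 0 := by
    intro χ
    rw [kloosterman_mellin_eq ψ kk ll hll χs ηs χ]
    refine mul_ne_zero (Finset.prod_ne_zero_iff.mpr fun i _ => ?_)
      (Finset.prod_ne_zero_iff.mpr fun j _ => ?_)
    · rw [← gaussSum_eq_sum_units']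
      exact gaussSum_ne_zero' _ hψ
    · rw [← gaussSum_eq_sum_units']
      exact gaussSum_ne_zero' _ hψ'
  -- reindexing the Mellin transform of a translate
  have hre : ∀ (χ : MulChar k ℂ) (d : kˣ),
      ∑ u : kˣ, χ (u : k) * Kl (k' := k') ψ kk ll χs ηs (u * d)
        = χ (((d⁻¹ : kˣ) : k)) * ∑ u : kˣ, χ (u : k) * Kl (k' := k') ψ kk ll χs ηs u := by
    intro χ d
    rw [Finset.mul_sum]
    refine Fintype.sum_equiv (Equiv.mulRight d) _ _ fun u => ?_
    show χ (u : k) * Kl (k' := k') ψ kk ll χs ηs (u * d)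
      = χ ((d⁻¹ : kˣ) : k) * (χ ((u * d : kˣ) : k) * Kl (k' := k') ψ kk ll χs ηs (u * d))
    have h1 : χ ((d⁻¹ : kˣ) : k) * χ ((u * d : kˣ) : k) = χ (u : k) := by
      rw [← map_mul, ← Units.val_mul]
      congr 2
      rw [mul_comm u d, ← mul_assoc, inv_mul_cancel, one_mul]
    rw [← mul_assoc, h1]
  -- the key identity
  have key : ∀ χ : MulChar k ℂ, χ ((b : kˣ) : k) = (c : ℂ) * χ ((a : kˣ) : k) := by
    intro χ
    have h2' : ∑ u : kˣ, χ (u : k) * Kl (k' := k') ψ kk ll χs ηs (u * a)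
        = (c : ℂ) * ∑ u : kˣ, χ (u : k) * Kl (k' := k') ψ kk ll χs ηs (u * b) := by
      rw [Finset.mul_sum]
      exact Finset.sum_congr rfl fun u _ => by rw [hprop u]; ring
    rw [hre χ a, hre χ b] at h2'
    have h3 : χ ((a⁻¹ : kˣ) : k) = (c : ℂ) * χ ((b⁻¹ : kˣ) : k) := by
      have := h2'
      rw [← mul_assoc] at this
      exact mul_right_cancel₀ (hM χ) this
    have inva : χ ((a⁻¹ : kˣ) : k) * χ ((a : kˣ) : k) = 1 := by
      rw [← map_mul, ← Units.val_mul, inv_mul_cancel, Units.val_one, map_one]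
    have invb : χ ((b⁻¹ : kˣ) : k) * χ ((b : kˣ) : k) = 1 := by
      rw [← map_mul, ← Units.val_mul, inv_mul_cancel, Units.val_one, map_one]
    linear_combination (χ ((a : kˣ) : k) * χ ((b : kˣ) : k)) * h3
      - χ ((b : kˣ) : k) * inva + (c : ℂ) * χ ((a : kˣ) : k) * invb
  -- c = 1
  have hc : (c : ℂ) = 1 := by
    have h1 := key 1
    rw [MulChar.one_apply_coe, MulChar.one_apply_coe, mul_one] at h1
    exact h1.symm
  refine ⟨Units.ext hc, ?_⟩
  -- a = b
  by_contra hne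
  have htu : b * a⁻¹ ≠ 1 := fun h => hne ((mul_inv_eq_one.mp h).symm)
  have htk : (((b * a⁻¹ : kˣ) : k)) ≠ 1 := fun h => htu (Units.ext (by rwa [Units.val_one]))
  haveI : NeZero ((Monoid.exponent kˣ : ℕ) : ℂ) :=
    ⟨Nat.cast_ne_zero.mpr Monoid.exponent_ne_zero_of_finite⟩
  obtain ⟨χ, hχ⟩ := MulChar.exists_apply_ne_one_of_hasEnoughRootsOfUnity k ℂ htk
  apply hχ
  have hk := key χ
  rw [hc, one_mul] at hk
  rw [Units.val_mul, map_mul, hk, ← map_mul, ← Units.val_mul, mul_inv_cancel,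
    Units.val_one, map_one]
end

section
/- Define P₋(T) := ∏_{j=1}^{2n} (T + (1+φζ^j)/(1−φζ^j)) ∈ F̄[T]. Then P₋′(−y)·P₋(−1) is a nonzero element of L, and P₋′(−y)·P₋(−1) ≡ (2φ^{−1}/(1−φ)^{2n−1})·(2n/(1+φ)) modulo N_{L/K}(L^×); that is, there exists z ∈ L^× with P₋′(−y)·P₋(−1) = (2φ^{−1}/(1−φ)^{2n−1})·(2n/(1+φ))·N_{L/K}(z). (Lemma computing P₋′(−y_u)·P₋(−1) modulo norms, used in the evaluation of transfer factors.) -/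
/-! `P₋ = ∏ (T + a_j)`, where `a_j = (1 + w)/(1 - w)` are the Cayley transforms of the
conjugates `w = φζʲ` of `φ`, so `P₋(-1)` and `P₋′(-y) = ∏_{j ≠ 0} (a_j - a_0)` factor through
`∏ (1 - φζʲ) = 1 - φ^{2n} = 1 - c`, `∏_{j ≠ 0} (1 - ζʲ) = 2n` and `∏ ζʲ = -1`. This gives
`P₋′(-y)·P₋(-1) = (2φ)^{4n-1}·2n·(1-φ) / ((1-φ)^{2n-1}(1-c)²)`, whose quotient by
`(2φ⁻¹/(1-φ)^{2n-1})·(2n/(1+φ))` is `t²(1 - φ²) = N_{L/K}(t + tφ)` for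
`t = 2^{2n-1} c/(1-c) ∈ F`. -/

open Polynomial Finset

namespace IsPrimitiveRoot

variable {R : Type*} [CommRing R] [IsDomain R] {ζ : R} {m : ℕ}

theorem prod_range_one_sub_mul_pow (hζ : IsPrimitiveRoot ζ m) (hm : 0 < m) (a : R) :
    ∏ j ∈ range m, (1 - a * ζ ^ j) = 1 - a ^ m := by
  simpa [eval_prod, mul_comm] using (congrArg (eval 1) (X_pow_sub_C_eq_prod hζ hm rfl)).symm

theorem prod_range_pow_eq_neg_one {n : ℕ} (hζ : IsPrimitiveRoot ζ (2 * n)) (hn : n ≠ 0) :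
    ∏ j ∈ range (2 * n), ζ ^ j = -1 := by
  have hζn : ζ ^ n = -1 := by
    have := hζ.pow_of_dvd hn (dvd_mul_left n 2)
    rw [Nat.mul_div_cancel _ (Nat.pos_of_ne_zero hn)] at this
    exact this.eq_neg_one_of_two_right
  have hsum : ∑ j ∈ range (2 * n), j = n * (2 * n - 1) := by
    have := sum_range_id_mul_two (2 * n)
    rw [mul_assoc] at this
    linarith
  rw [prod_pow_eq_pow_sum, hsum, pow_mul, hζn, Odd.neg_one_pow ⟨n - 1, by omega⟩]

end IsPrimitiveRoot

theorem eval_derivative_prod_range_succ_X_add_C {R : Type*} [CommRing R] (a : ℕ → R) (k : ℕ) :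
    eval (-a 0) (derivative (∏ j ∈ range (k + 1), (X + C (a j)))) =
      ∏ j ∈ range k, (a (j + 1) - a 0) := by
  rw [prod_range_succ', derivative_mul]
  simp [eval_prod, sub_eq_neg_add]

section Ring

variable {R : Type*} [Ring R] {x : R}

theorem one_sub_ne_zero_of_pow_ne_one {m : ℕ} (hx : x ^ m ≠ 1) : 1 - x ≠ 0 :=
  fun h ↦ hx (by rw [← sub_eq_zero.mp h, one_pow])

theorem one_add_ne_zero_of_pow_two_mul_ne_one {n : ℕ} (hx : x ^ (2 * n) ≠ 1) : 1 + x ≠ 0 :=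
  fun h ↦ hx (by rw [eq_neg_of_add_eq_zero_right h, pow_mul, neg_one_sq, one_pow])

end Ring

section CayleyTransform

variable {E : Type*} [Field E] {φ ζ : E} {m : ℕ}

theorem one_sub_mul_pow_ne_zero (hζ : IsPrimitiveRoot ζ m) (hφ : φ ^ m ≠ 1) (j : ℕ) :
    1 - φ * ζ ^ j ≠ 0 := by
  intro h
  apply hφ
  rw [← one_pow m, sub_eq_zero.mp h, mul_pow, ← pow_mul, mul_comm j, pow_mul, hζ.pow_eq_one,
    one_pow, mul_one]

theorem eval_neg_one_prod_X_add_C_cayley (hζ : IsPrimitiveRoot ζ m) (hφ : φ ^ m ≠ 1) :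
    eval (-1) (∏ j ∈ range m, (X + C ((1 + φ * ζ ^ j) / (1 - φ * ζ ^ j)))) =
      (2 * φ) ^ m * (∏ j ∈ range m, ζ ^ j) / (1 - φ ^ m) := by
  have hm : 0 < m := Nat.pos_of_ne_zero (by rintro rfl; exact hφ (pow_zero φ))
  have hfactor (j : ℕ) :
      -1 + (1 + φ * ζ ^ j) / (1 - φ * ζ ^ j) = 2 * φ * ζ ^ j / (1 - φ * ζ ^ j) := by
    have := one_sub_mul_pow_ne_zero hζ hφ j
    field_simp
    ring
  simp only [eval_prod, eval_add, eval_X, eval_C, hfactor, prod_div_distrib, prod_mul_distrib,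
    prod_const, card_range, hζ.prod_range_one_sub_mul_pow hm, mul_pow]

theorem eval_derivative_prod_X_add_C_cayley (hζ : IsPrimitiveRoot ζ m) (hφ : φ ^ m ≠ 1) :
    eval (-((1 + φ) / (1 - φ)))
        (derivative (∏ j ∈ range m, (X + C ((1 + φ * ζ ^ j) / (1 - φ * ζ ^ j))))) =
      (-(2 * φ)) ^ (m - 1) * m * (1 - φ) / ((1 - φ) ^ (m - 1) * (1 - φ ^ m)) := by
  obtain ⟨k, rfl⟩ : ∃ k, m = k + 1 :=
    Nat.exists_eq_succ_of_ne_zero (by rintro rfl; exact hφ (pow_zero φ))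
  have h1φ := one_sub_ne_zero_of_pow_ne_one hφ
  have hfactor (j : ℕ) : (1 + φ * ζ ^ (j + 1)) / (1 - φ * ζ ^ (j + 1)) - (1 + φ) / (1 - φ) =
      -(2 * φ) * (1 - ζ ^ (j + 1)) / ((1 - φ) * (1 - φ * ζ ^ (j + 1))) := by
    have := one_sub_mul_pow_ne_zero hζ hφ (j + 1)
    field_simp
    ring
  have hrest : ∏ j ∈ range k, (1 - φ * ζ ^ (j + 1)) = (1 - φ ^ (k + 1)) / (1 - φ) := by
    rw [eq_div_iff h1φ, ← hζ.prod_range_one_sub_mul_pow k.succ_pos, prod_range_succ' _ k,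
      pow_zero, mul_one]
  have := eval_derivative_prod_range_succ_X_add_C (fun j ↦ (1 + φ * ζ ^ j) / (1 - φ * ζ ^ j)) k
  simp only [pow_zero, mul_one] at this
  rw [this, prod_congr rfl fun j _ ↦ hfactor j, prod_div_distrib, prod_mul_distrib,
    prod_mul_distrib, prod_const, prod_const, card_range, hζ.prod_one_sub_pow_eq_order, hrest]
  field_simp
  push_cast
  ring

/-- With `ψ = φ²` and `ψⁿ = c`, this is the element `t = 2^{2n-1} c/(1-c)` of the base field. -/
def normWitness (ψ : E) (n : ℕ) : E :=
  2 ^ (2 * n - 1) * ψ ^ n / (1 - ψ ^ n)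

theorem normWitness_ne_zero [NeZero (2 : E)] {ψ : E} {n : ℕ} (hψ0 : ψ ≠ 0) (hψ1 : ψ ^ n ≠ 1) :
    normWitness ψ n ≠ 0 :=
  div_ne_zero (mul_ne_zero (pow_ne_zero _ two_ne_zero) (pow_ne_zero _ hψ0))
    (sub_ne_zero.mpr hψ1.symm)

theorem normWitness_mem {F : Type*} [Field F] [Algebra F E] {S : IntermediateField F E} {ψ : E}
    (hψ : ψ ∈ S) (n : ℕ) : normWitness ψ n ∈ S :=
  div_mem (mul_mem (pow_mem (ofNat_mem S 2) _) (pow_mem hψ n)) (sub_mem (one_mem S) (pow_mem hψ n))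

theorem eval_derivative_mul_eval_neg_one_cayley {n : ℕ} (hζ : IsPrimitiveRoot ζ (2 * n))
    (hφ0 : φ ≠ 0) (hφ : φ ^ (2 * n) ≠ 1) :
    eval (-((1 + φ) / (1 - φ)))
        (derivative (∏ j ∈ range (2 * n), (X + C ((1 + φ * ζ ^ j) / (1 - φ * ζ ^ j))))) *
      eval (-1) (∏ j ∈ range (2 * n), (X + C ((1 + φ * ζ ^ j) / (1 - φ * ζ ^ j)))) =
    2 * φ⁻¹ / (1 - φ) ^ (2 * n - 1) * ((2 * n : E) / (1 + φ)) *
      (normWitness (φ ^ 2) n ^ 2 - normWitness (φ ^ 2) n ^ 2 * φ ^ 2) := by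
  have hn : n ≠ 0 := by rintro rfl; exact hφ (pow_zero φ)
  rw [eval_derivative_prod_X_add_C_cayley hζ hφ, eval_neg_one_prod_X_add_C_cayley hζ hφ,
    hζ.prod_range_pow_eq_neg_one hn, normWitness, ← pow_mul]
  have h1φ := one_sub_ne_zero_of_pow_ne_one hφ
  have h1pφ := one_add_ne_zero_of_pow_two_mul_ne_one hφ
  have h1φm : 1 - φ ^ (2 * n) ≠ 0 := sub_ne_zero.mpr (Ne.symm hφ)
  obtain ⟨k, hk⟩ : ∃ k, 2 * n = k + 1 := ⟨2 * n - 1, by omega⟩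
  have hodd : Odd k := ⟨n - 1, by omega⟩
  have hnk : (2 * n : E) = k + 1 := by simpa using congrArg (Nat.cast (R := E)) hk
  rw [hk] at h1φm ⊢
  rw [hnk, Nat.add_sub_cancel, hodd.neg_pow]
  push_cast
  field_simp
  ring

end CayleyTransform

theorem pval_neg_mod_norms_general {F : Type*} [Field F] [CharZero F]
    (n : ℕ) (c : F)
    (hirr : Irreducible (X ^ (2 * n) - C c : F[X]))
    (φ ζ : AlgebraicClosure F)
    (hφ : φ ^ (2 * n) = algebraMap F (AlgebraicClosure F) c)
    (hζ : IsPrimitiveRoot ζ (2 * n))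
    (P : Polynomial (AlgebraicClosure F))
    (hP : P = ∏ j ∈ Finset.range (2 * n), (X + C ((1 + φ * ζ ^ j) / (1 - φ * ζ ^ j)))) :
    (Polynomial.derivative P).eval (-((1 + φ) / (1 - φ))) * P.eval (-1) ∈
        IntermediateField.adjoin F {φ} ∧
    (Polynomial.derivative P).eval (-((1 + φ) / (1 - φ))) * P.eval (-1) ≠ 0 ∧
    ∃ a b : AlgebraicClosure F,
      a ∈ IntermediateField.adjoin F {φ ^ 2} ∧ b ∈ IntermediateField.adjoin F {φ ^ 2} ∧
      a ^ 2 - b ^ 2 * φ ^ 2 ≠ 0 ∧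
      (Polynomial.derivative P).eval (-((1 + φ) / (1 - φ))) * P.eval (-1) =
        (2 * φ⁻¹ / (1 - φ) ^ (2 * n - 1)) *
          ((2 * n : AlgebraicClosure F) / (1 + φ)) * (a ^ 2 - b ^ 2 * φ ^ 2) := by
  have h2n : 2 * n ≠ 0 := ne_zero_of_irreducible_X_pow_sub_C hirr
  have hc0 : c ≠ 0 := ne_zero_of_irreducible_X_pow_sub_C' (by omega) hirr
  have hc1 : c ≠ 1 := fun h ↦
    pow_ne_of_irreducible_X_pow_sub_C hirr dvd_rfl (by omega) 1 (by rw [one_pow, h])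
  have hφ0 : φ ≠ 0 := ne_zero_pow h2n (hφ ▸ (_root_.map_ne_zero _).mpr hc0)
  have hφ1 : φ ^ (2 * n) ≠ 1 := hφ ▸ (map_ne_one_iff _ (algebraMap F _).injective).mpr hc1
  have h1φ := one_sub_ne_zero_of_pow_ne_one hφ1
  have h1pφ := one_add_ne_zero_of_pow_two_mul_ne_one hφ1
  set t := normWitness (φ ^ 2) n
  have ht0 : t ≠ 0 := normWitness_ne_zero (pow_ne_zero 2 hφ0) (by rwa [← pow_mul])
  have hnorm : t ^ 2 - t ^ 2 * φ ^ 2 ≠ 0 := by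
    rw [← mul_one_sub, ← one_pow 2, sq_sub_sq]
    exact mul_ne_zero (pow_ne_zero 2 ht0) (mul_ne_zero h1pφ h1φ)
  have htK := normWitness_mem (IntermediateField.mem_adjoin_simple_self F (φ ^ 2)) n
  have hkey := eval_derivative_mul_eval_neg_one_cayley hζ hφ0 hφ1
  subst hP
  refine ⟨?_, ?_, t, t, htK, htK, hnorm, hkey⟩
  · have hφL := IntermediateField.mem_adjoin_simple_self F φ
    have htL := normWitness_mem (pow_mem hφL 2) n
    rw [hkey]
    exact mul_mem (mul_mem (div_mem (mul_mem (ofNat_mem _ 2) (inv_mem hφL))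
      (pow_mem (sub_mem (one_mem _) hφL) _))
      (div_mem (mul_mem (ofNat_mem _ 2) (natCast_mem _ n)) (add_mem (one_mem _) hφL)))
      (sub_mem (pow_mem htL 2) (mul_mem (pow_mem htL 2) (pow_mem hφL 2)))
  · have h2n' : (2 * n : AlgebraicClosure F) ≠ 0 := by norm_cast
    rw [hkey]
    exact mul_ne_zero (mul_ne_zero (div_ne_zero (mul_ne_zero two_ne_zero (inv_ne_zero hφ0))
      (pow_ne_zero _ h1φ)) (div_ne_zero h2n' h1pφ)) hnorm

/-- **Computation of `P₋′(−y)·P₋(−1)` modulo norms.** Let `F` be a field of characteristic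
zero, `n ≥ 1`, and `c ∈ F^×` with `X^{2n} − c` irreducible over `F`. Fix a root `φ` of
`X^{2n} − c` and a primitive `2n`-th root of unity `ζ` in an algebraic closure of `F`, and
set `L := F(φ)`, `K := F(φ²)` and `y := (1+φ)/(1−φ)`. Let
`P₋(T) := ∏_{j=1}^{2n} (T + (1+φζ^j)/(1−φζ^j))`. Then `P₋′(−y)·P₋(−1)` is a nonzero element
of `L` and is congruent to `(2φ^{−1}/(1−φ)^{2n−1})·(2n/(1+φ))` modulo `N_{L/K}(L^×)`; here
`N_{L/K}(L^×) = {a² − b²φ² ≠ 0 : a, b ∈ K}` since `L = K(φ)` with `φ² ∈ K` and `[L:K] = 2`. -/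
theorem pval_neg_mod_norms {F : Type*} [Field F] [CharZero F]
    (n : ℕ) (hn : 1 ≤ n) (c : F) (hc : c ≠ 0)
    (hirr : Irreducible (X ^ (2 * n) - C c : F[X]))
    (φ ζ : AlgebraicClosure F)
    (hφ : φ ^ (2 * n) = algebraMap F (AlgebraicClosure F) c)
    (hζ : IsPrimitiveRoot ζ (2 * n))
    (P : Polynomial (AlgebraicClosure F))
    (hP : P = ∏ j ∈ Finset.range (2 * n), (X + C ((1 + φ * ζ ^ j) / (1 - φ * ζ ^ j)))) :
    (Polynomial.derivative P).eval (-((1 + φ) / (1 - φ))) * P.eval (-1) ∈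
        IntermediateField.adjoin F {φ} ∧
    (Polynomial.derivative P).eval (-((1 + φ) / (1 - φ))) * P.eval (-1) ≠ 0 ∧
    ∃ a b : AlgebraicClosure F,
      a ∈ IntermediateField.adjoin F {φ ^ 2} ∧ b ∈ IntermediateField.adjoin F {φ ^ 2} ∧
      a ^ 2 - b ^ 2 * φ ^ 2 ≠ 0 ∧
      (Polynomial.derivative P).eval (-((1 + φ) / (1 - φ))) * P.eval (-1) =
        (2 * φ⁻¹ / (1 - φ) ^ (2 * n - 1)) *
          ((2 * n : AlgebraicClosure F) / (1 + φ)) * (a ^ 2 - b ^ 2 * φ ^ 2) :=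
  pval_neg_mod_norms_general n c hirr φ ζ hφ hζ P hP
end
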